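/- In the fair-division instance constructed from an LSAT formula φ as follows — goods y_1,…,y_n, literal goods x_1,…,x_n, x̄_1,…,x̄_n, goods g_1,…,g_q, d_1,…,d_p; agents X_i, Y_i (i ∈ [n]), C_i, D_i (i ∈ [p]), A_i, B_i, G_i (i ∈ [q]); edges (X_i,Y_i), (C_i,D_i), (G_i,A_i), (A_i,B_i); valuations: X_i values {x_i, x̄_i, y_i}, Y_i values only y_i, C_i values its three literal goods and d_i, D_i values only d_i, G_i values only g_i, A_i values {g_i, s_i, t_i, ℓ_i}, B_i values {s_i, t_i} — every allocation π that is complete, non-wasteful, and graph-envy-free with respect to H satisfies: π(Y_i) = {y_i} for all i ∈ [n], π(D_i) = {d_i} for all i ∈ [p], π(G_i) = {g_i} for all i ∈ [q], and for every i ∈ [n], π(X_i) is a nonempty subset of {x_i, x̄_i}. -/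

import Mathlib

namespace LsatReduction

/-- A literal over `n` variables: `(b, i)` stands for `x_i` if `b = true` and
for `x̄_i` if `b = false`. -/
abbrev Lit (n : ℕ) := Bool × Fin n

/-- The truth assignment `τ` satisfies the literal `l`. -/
def satLit {n : ℕ} (τ : Fin n → Bool) (l : Lit n) : Prop := τ l.2 = l.1

/-- The set of literals of a three-literal clause. -/
def clauseLits {n : ℕ} (c : Lit n × Lit n × Lit n) : Finset (Lit n) :=
  {c.1, c.2.1, c.2.2}

/-- Agents of the reduced instance. -/
inductive Agent (n p q : ℕ) where
  | X (i : Fin n)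
  | Y (i : Fin n)
  | C (i : Fin p)
  | D (i : Fin p)
  | A (i : Fin q)
  | B (i : Fin q)
  | G (i : Fin q)
deriving DecidableEq

/-- Goods of the reduced instance: `y_1, …, y_n`, the literal goods
`x_1, …, x_n, x̄_1, …, x̄_n`, the goods `g_1, …, g_q` and `d_1, …, d_p`. -/
inductive Good (n p q : ℕ) where
  | y (i : Fin n)
  | lit (l : Lit n)
  | g (i : Fin q)
  | d (i : Fin p)
deriving DecidableEq

/-- The social network `H`: the edges `(X_i, Y_i)`, `(C_i, D_i)`, `(G_i, A_i)`
and `(A_i, B_i)`; a disjoint union of paths. -/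
def H (n p q : ℕ) : SimpleGraph (Agent n p q) :=
  SimpleGraph.fromRel (fun a b =>
    match a, b with
    | .X i, .Y j => i = j
    | .C i, .D j => i = j
    | .G i, .A j => i = j
    | .A i, .B j => i = j
    | _, _ => False)

/-- Additive 0/1 valuations: `X_i` values `{x_i, x̄_i, y_i}`; `Y_i` values only
`y_i`; `C_i` values its three literal goods and `d_i`; `D_i` values only
`d_i`; `G_i` values only `g_i`; `A_i` values `{g_i, s_i, t_i, ℓ_i}`; `B_i`
values `{s_i, t_i}`; everything else is 0. -/
def val (n p q : ℕ) (s ℓ t : Fin q → Lit n) (c : Fin p → Lit n × Lit n × Lit n) :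
    Agent n p q → Good n p q → ℕ
  | .X i, .y j => if i = j then 1 else 0
  | .X i, .lit l => if l.2 = i then 1 else 0
  | .Y i, .y j => if i = j then 1 else 0
  | .C i, .lit l => if l ∈ clauseLits (c i) then 1 else 0
  | .C i, .d j => if i = j then 1 else 0
  | .D i, .d j => if i = j then 1 else 0
  | .G i, .g j => if i = j then 1 else 0
  | .A i, .g j => if i = j then 1 else 0
  | .A i, .lit l => if l = s i ∨ l = t i ∨ l = ℓ i then 1 else 0
  | .B i, .lit l => if l = s i ∨ l = t i then 1 else 0
  | _, _ => 0

lemma adjXY {n p q : ℕ} (i : Fin n) : (H n p q).Adj (Agent.X i) (Agent.Y i) := by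
  rw [H, SimpleGraph.fromRel_adj]
  exact ⟨(fun h => by cases h), Or.inl rfl⟩

lemma adjCD {n p q : ℕ} (i : Fin p) : (H n p q).Adj (Agent.C i) (Agent.D i) := by
  rw [H, SimpleGraph.fromRel_adj]
  exact ⟨(fun h => by cases h), Or.inl rfl⟩

lemma adjGA {n p q : ℕ} (i : Fin q) : (H n p q).Adj (Agent.G i) (Agent.A i) := by
  rw [H, SimpleGraph.fromRel_adj]
  exact ⟨(fun h => by cases h), Or.inl rfl⟩

/-- In the instance constructed from an LSAT formula, every
complete, non-wasteful allocation that is graph-envy-free w.r.t. `H` satisfies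
`π(Y_i) = {y_i}`, `π(D_i) = {d_i}`, `π(G_i) = {g_i}`, and every `π(X_i)` is a
nonempty subset of `{x_i, x̄_i}`. -/
theorem forced_bundles
    (n p q : ℕ) (s ℓ t : Fin q → Lit n) (c : Fin p → Lit n × Lit n × Lit n)
    (hiso : ∀ i j : Fin p, i ≠ j → Disjoint (clauseLits (c i)) (clauseLits (c j)))
    (hcoup : ∀ (i : Fin p) (j : Fin q),
      Disjoint (clauseLits (c i)) ({s j, ℓ j, t j} : Finset (Lit n)))
    (π : Agent n p q → Finset (Good n p q))
    (hdisj : ∀ a b : Agent n p q, a ≠ b → Disjoint (π a) (π b))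
    (hcomplete : ∀ g : Good n p q, ∃ a : Agent n p q, g ∈ π a)
    (hnonwasteful : ∀ a : Agent n p q, ∀ g ∈ π a, val n p q s ℓ t c a g = 1)
    (hgef : ∀ a b : Agent n p q, (H n p q).Adj a b →
      ∑ g ∈ π b, val n p q s ℓ t c a g ≤ ∑ g ∈ π a, val n p q s ℓ t c a g) :
    (∀ i : Fin n, π (Agent.Y i) = {Good.y i}) ∧
    (∀ i : Fin p, π (Agent.D i) = {Good.d i}) ∧
    (∀ i : Fin q, π (Agent.G i) = {Good.g i}) ∧
    (∀ i : Fin n,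
      π (Agent.X i) ≠ ∅ ∧
      π (Agent.X i) ⊆ {Good.lit (true, i), Good.lit (false, i)}) := by
  -- Y_i is forced to {y_i}
  have hY : ∀ i : Fin n, π (Agent.Y i) = {Good.y i} := by
    intro i
    have hsub : π (Agent.Y i) ⊆ {Good.y i} := by
      intro g hg
      have h1 := hnonwasteful _ g hg
      match g with
      | .y j =>
        have : i = j := by by_contra h; simp [val, h] at h1
        subst this; simp
      | .lit l => simp [val] at h1
      | .g j => simp [val] at h1
      | .d j => simp [val] at h1
    obtain ⟨a, ha⟩ := hcomplete (Good.y i)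
    match a with
    | .Y j =>
      have h1 := hnonwasteful _ _ ha
      have hij : j = i := by by_contra h; simp [val, h] at h1
      rw [hij] at ha
      exact Finset.Subset.antisymm hsub (Finset.singleton_subset_iff.2 ha)
    | .X j =>
      have h1 := hnonwasteful _ _ ha
      have hij : j = i := by by_contra h; simp [val, h] at h1
      rw [hij] at ha
      exfalso
      have hempty : π (Agent.Y i) = ∅ := by
        rw [Finset.eq_empty_iff_forall_notMem]
        intro g hg
        have hgy : g = Good.y i := Finset.mem_singleton.1 (hsub hg)
        subst hgy
        exact Finset.disjoint_left.1 (hdisj _ _ (fun h => by cases h)) ha hg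
      have hge := hgef (Agent.Y i) (Agent.X i) (adjXY i).symm
      rw [hempty] at hge
      simp only [Finset.sum_empty] at hge
      have hcon := le_trans (Finset.single_le_sum
        (f := fun g => val n p q s ℓ t c (Agent.Y i) g) (fun g _ => Nat.zero_le _) ha) hge
      simp [val] at hcon
    | .C j => have h1 := hnonwasteful _ _ ha; simp [val] at h1
    | .D j => have h1 := hnonwasteful _ _ ha; simp [val] at h1
    | .A j => have h1 := hnonwasteful _ _ ha; simp [val] at h1
    | .B j => have h1 := hnonwasteful _ _ ha; simp [val] at h1
    | .G j => have h1 := hnonwasteful _ _ ha; simp [val] at h1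
  have hD : ∀ i : Fin p, π (Agent.D i) = {Good.d i} := by
    intro i
    have hsub : π (Agent.D i) ⊆ {Good.d i} := by
      intro g hg
      have h1 := hnonwasteful _ g hg
      match g with
      | .d j =>
        have : i = j := by by_contra h; simp [val, h] at h1
        subst this; simp
      | .lit l => simp [val] at h1
      | .g j => simp [val] at h1
      | .y j => simp [val] at h1
    obtain ⟨a, ha⟩ := hcomplete (Good.d i)
    match a with
    | .D j =>
      have h1 := hnonwasteful _ _ ha
      have hij : j = i := by by_contra h; simp [val, h] at h1
      rw [hij] at ha
      exact Finset.Subset.antisymm hsub (Finset.singleton_subset_iff.2 ha)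
    | .C j =>
      have h1 := hnonwasteful _ _ ha
      have hij : j = i := by by_contra h; simp [val, h] at h1
      rw [hij] at ha
      exfalso
      have hempty : π (Agent.D i) = ∅ := by
        rw [Finset.eq_empty_iff_forall_notMem]
        intro g hg
        have hgy : g = Good.d i := Finset.mem_singleton.1 (hsub hg)
        subst hgy
        exact Finset.disjoint_left.1 (hdisj _ _ (fun h => by cases h)) ha hg
      have hge := hgef (Agent.D i) (Agent.C i) (adjCD i).symm
      rw [hempty] at hge
      simp only [Finset.sum_empty] at hge
      have hcon := le_trans (Finset.single_le_sum
        (f := fun g => val n p q s ℓ t c (Agent.D i) g) (fun g _ => Nat.zero_le _) ha) hge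
      simp [val] at hcon
    | .X j => have h1 := hnonwasteful _ _ ha; simp [val] at h1
    | .Y j => have h1 := hnonwasteful _ _ ha; simp [val] at h1
    | .A j => have h1 := hnonwasteful _ _ ha; simp [val] at h1
    | .B j => have h1 := hnonwasteful _ _ ha; simp [val] at h1
    | .G j => have h1 := hnonwasteful _ _ ha; simp [val] at h1
  have hG : ∀ i : Fin q, π (Agent.G i) = {Good.g i} := by
    intro i
    have hsub : π (Agent.G i) ⊆ {Good.g i} := by
      intro g hg
      have h1 := hnonwasteful _ g hg
      match g with
      | .g j =>
        have : i = j := by by_contra h; simp [val, h] at h1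
        subst this; simp
      | .lit l => simp [val] at h1
      | .d j => simp [val] at h1
      | .y j => simp [val] at h1
    obtain ⟨a, ha⟩ := hcomplete (Good.g i)
    match a with
    | .G j =>
      have h1 := hnonwasteful _ _ ha
      have hij : j = i := by by_contra h; simp [val, h] at h1
      rw [hij] at ha
      exact Finset.Subset.antisymm hsub (Finset.singleton_subset_iff.2 ha)
    | .A j =>
      have h1 := hnonwasteful _ _ ha
      have hij : j = i := by by_contra h; simp [val, h] at h1
      rw [hij] at ha
      exfalso
      have hempty : π (Agent.G i) = ∅ := by
        rw [Finset.eq_empty_iff_forall_notMem]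
        intro g hg
        have hgy : g = Good.g i := Finset.mem_singleton.1 (hsub hg)
        subst hgy
        exact Finset.disjoint_left.1 (hdisj _ _ (fun h => by cases h)) ha hg
      have hge := hgef (Agent.G i) (Agent.A i) (adjGA i)
      rw [hempty] at hge
      simp only [Finset.sum_empty] at hge
      have hcon := le_trans (Finset.single_le_sum
        (f := fun g => val n p q s ℓ t c (Agent.G i) g) (fun g _ => Nat.zero_le _) ha) hge
      simp [val] at hcon
    | .X j => have h1 := hnonwasteful _ _ ha; simp [val] at h1
    | .Y j => have h1 := hnonwasteful _ _ ha; simp [val] at h1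
    | .C j => have h1 := hnonwasteful _ _ ha; simp [val] at h1
    | .B j => have h1 := hnonwasteful _ _ ha; simp [val] at h1
    | .D j => have h1 := hnonwasteful _ _ ha; simp [val] at h1
  refine ⟨hY, hD, hG, ?_⟩
  intro i
  constructor
  · intro hempty
    have hge := hgef (Agent.X i) (Agent.Y i) (adjXY i)
    rw [hempty, hY i] at hge
    simp [val] at hge
  · intro g hg
    have h1 := hnonwasteful _ g hg
    match g with
    | .y j =>
      have hij : i = j := by by_contra h; simp [val, h] at h1
      subst hij
      exfalso
      have : Good.y i ∈ π (Agent.Y i) := by rw [hY i]; simp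
      exact Finset.disjoint_left.1 (hdisj _ _ (fun h => by cases h)) hg this
    | .lit l =>
      obtain ⟨b, j⟩ := l
      have hij : j = i := by by_contra h; simp [val, h] at h1
      subst hij
      cases b <;> simp
    | .g j => simp [val] at h1
    | .d j => simp [val] at h1


end LsatReduction
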